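/- Invariance of the Lyapunov sublevel set and boundedness of velocities: under the closed-loop dynamics, with β := 2α/(1+α) and V(t) := (1/(2(1+β)))·∑_{i=1}^N ∑_{j=1}^N a_ij·|e_ij(t)|^{1+β} + (1/2)·∑_{i=1}^N v_i(t)², one has V(t) ≤ V(0) for all t ≥ 0, and consequently v_i(t)² ≤ 2·V(0) for every i and every t ≥ 0. -/

import Mathlib

/-- `sig(x)^α := sign(x) · |x|^α`. -/
noncomputable def sig (x α : ℝ) : ℝ := Real.sign x * |x| ^ α



lemma sig_neg (x α : ℝ) : sig (-x) α = - sig x α := by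
  unfold sig; rw [Real.sign_neg, abs_neg]; ring

lemma mul_sig (x : ℝ) {α : ℝ} (hα : 0 < α) : x * sig x α = |x| ^ (1 + α) := by
  unfold sig
  rcases lt_trichotomy x 0 with h | h | h
  · rw [Real.sign_of_neg h, abs_of_neg h,
      Real.rpow_add' (by linarith) (by positivity), Real.rpow_one]
    ring
  · subst h; simp [Real.zero_rpow (by positivity : (1:ℝ) + α ≠ 0)]
  · rw [Real.sign_of_pos h, abs_of_pos h,
      Real.rpow_add' h.le (by positivity), Real.rpow_one]
    ring

lemma myHasDerivAt_abs_rpow {β : ℝ} (hβ : 0 < β) (x : ℝ) :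
    HasDerivAt (fun y : ℝ => |y| ^ (1 + β)) ((1 + β) * sig x β) x := by
  rcases lt_trichotomy x 0 with h | h | h
  · have h1 : HasDerivAt (fun y : ℝ => (-y) ^ (1 + β))
        ((1 + β) * (-x) ^ (1 + β - 1) * (-1)) x :=
      (Real.hasDerivAt_rpow_const (p := 1 + β)
        (Or.inl (by linarith : -x ≠ 0))).comp x (hasDerivAt_neg x)
    have h2 : (fun y : ℝ => (-y) ^ (1 + β)) =ᶠ[nhds x] fun y => |y| ^ (1 + β) := by
      filter_upwards [Iio_mem_nhds h] with y hy
      rw [abs_of_neg hy]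
    have h3 := h1.congr_of_eventuallyEq h2.symm
    refine h3.congr_deriv ?_
    unfold sig
    rw [Real.sign_of_neg h, abs_of_neg h]
    ring_nf
  · subst h
    rw [hasDerivAt_iff_isLittleO]
    simp only [sig, Real.sign_zero, zero_mul, mul_zero, smul_zero, abs_zero, sub_zero,
      Real.zero_rpow (by positivity : (1:ℝ) + β ≠ 0), sub_zero]
    rw [Asymptotics.isLittleO_iff]
    intro c hc
    have ht : Filter.Tendsto (fun y : ℝ => |y| ^ β) (nhds 0) (nhds 0) := by
      have : ContinuousAt (fun y : ℝ => |y| ^ β) 0 := by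
        have hr : ContinuousAt (fun z : ℝ => z ^ β) (|(0:ℝ)|) := by
          simpa using Real.continuousAt_rpow_const 0 β (Or.inr hβ.le)
        exact hr.comp continuous_abs.continuousAt
      simpa [Real.zero_rpow hβ.ne'] using this.tendsto
    have hev : ∀ᶠ y : ℝ in nhds 0, |y| ^ β < c := ht (Iio_mem_nhds hc)
    filter_upwards [hev] with y hy
    have h1 : |y| ^ (1 + β) = |y| * |y| ^ β := by
      rw [Real.rpow_add' (abs_nonneg y) (by positivity), Real.rpow_one]
    rw [Real.norm_eq_abs, Real.norm_eq_abs,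
      abs_of_nonneg (Real.rpow_nonneg (abs_nonneg y) _), h1]
    calc |y| * |y| ^ β ≤ |y| * c := by
          exact mul_le_mul_of_nonneg_left (le_of_lt hy) (abs_nonneg y)
      _ = c * |y| := mul_comm _ _
  · have h1 : HasDerivAt (fun y : ℝ => y ^ (1 + β)) ((1 + β) * x ^ (1 + β - 1)) x :=
      Real.hasDerivAt_rpow_const (Or.inl h.ne')
    have h2 : (fun y : ℝ => y ^ (1 + β)) =ᶠ[nhds x] fun y => |y| ^ (1 + β) := by
      filter_upwards [Ioi_mem_nhds h] with y hy
      rw [abs_of_pos hy]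
    have h3 := h1.congr_of_eventuallyEq h2.symm
    refine h3.congr_deriv ?_
    unfold sig
    rw [Real.sign_of_pos h, abs_of_pos h]
    norm_num

lemma swap_sum {N : ℕ} (a f : Fin N → Fin N → ℝ) (ha : ∀ i j, a i j = a j i)
    (hf : ∀ i j, f i j = - f j i) (w : Fin N → ℝ) :
    ∑ i, ∑ j, a i j * f i j * w j = -∑ i, ∑ j, a i j * f i j * w i := by
  rw [Finset.sum_comm]
  rw [← Finset.sum_neg_distrib]
  refine Finset.sum_congr rfl fun x _ => ?_
  rw [← Finset.sum_neg_distrib]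
  refine Finset.sum_congr rfl fun y _ => ?_
  rw [ha y x, hf y x]; ring

set_option maxHeartbeats 1000000 in
/-- Invariance of the Lyapunov sublevel set: `V(t) ≤ V(0)` for all `t ≥ 0`, and
consequently `vᵢ(t)² ≤ 2·V(0)` for every `i` and every `t ≥ 0`. -/
theorem lyapunov_sublevel_invariant
    (N : ℕ) (G : SimpleGraph (Fin N)) [DecidableRel G.Adj]
    (a : Fin N → Fin N → ℝ) (ha : ∀ i j, a i j = if G.Adj i j then 1 else 0)
    (α : ℝ) (hα : α ∈ Set.Ioo (0 : ℝ) 1)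
    (q : Fin N → ℝ) (pstar : Fin N → Fin N → ℝ)
    (hps : ∀ i j, pstar i j = q i - q j)
    (p v : Fin N → ℝ → ℝ)
    (hdp : ∀ i, ∀ t : ℝ, 0 ≤ t → HasDerivAt (p i) (v i t) t)
    (hdv : ∀ i, ∀ t : ℝ, 0 ≤ t → HasDerivAt (v i)
      (-(∑ j, a i j * sig (p i t - p j t - pstar i j) (2 * α / (1 + α)))
        - ∑ j, a i j * sig (v i t - v j t) α) t)
    (β : ℝ) (hβ : β = 2 * α / (1 + α))
    (V : ℝ → ℝ)
    (hV : ∀ t : ℝ, V t =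
      (1 / (2 * (1 + β))) * ∑ i, ∑ j, a i j * |p i t - p j t - pstar i j| ^ (1 + β)
        + (1 / 2) * ∑ i, (v i t) ^ 2) :
    ∀ t : ℝ, 0 ≤ t → V t ≤ V 0 ∧ ∀ i, (v i t) ^ 2 ≤ 2 * V 0 := by
  
  obtain ⟨hα0, hα1⟩ := hα
  have hβ0 : 0 < β := by rw [hβ]; positivity
  have h1β : (0:ℝ) < 1 + β := by linarith
  have h1βne : (1:ℝ) + β ≠ 0 := ne_of_gt h1β
  have hαpos : 0 < α := hα0
  have hasymm : ∀ i j, a i j = a j i := by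
    intro i j; rw [ha, ha]; simp [G.adj_comm]
  have ha0 : ∀ i j, 0 ≤ a i j := by
    intro i j; rw [ha]; split <;> norm_num
  set D : ℝ → ℝ := fun t =>
    -(1/2) * ∑ i, ∑ j, a i j * sig (v i t - v j t) α * (v i t - v j t) with hD
  have hDnonpos : ∀ t, D t ≤ 0 := by
    intro t
    rw [hD]
    have : (0:ℝ) ≤ ∑ i, ∑ j, a i j * sig (v i t - v j t) α * (v i t - v j t) := by
      apply Finset.sum_nonneg; intro i _
      apply Finset.sum_nonneg; intro j _
      have h1 : (0:ℝ) ≤ sig (v i t - v j t) α * (v i t - v j t) := by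
        rw [mul_comm, mul_sig _ hαpos]
        positivity
      rw [mul_assoc]
      exact mul_nonneg (ha0 i j) h1
    nlinarith
  have key : ∀ t : ℝ, 0 ≤ t → HasDerivAt V (D t) t := by
    intro t ht
    have h1 : HasDerivAt
        (fun s => (1 / (2 * (1 + β))) *
          ∑ i, ∑ j, a i j * |p i s - p j s - pstar i j| ^ (1 + β))
        ((1 / (2 * (1 + β))) *
          ∑ i, ∑ j, a i j *
            ((1 + β) * sig (p i t - p j t - pstar i j) β * (v i t - v j t))) t := by
      apply HasDerivAt.const_mul
      apply HasDerivAt.fun_sum; intro i _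
      apply HasDerivAt.fun_sum; intro j _
      apply HasDerivAt.const_mul
      have he : HasDerivAt (fun s => p i s - p j s - pstar i j) (v i t - v j t) t :=
        ((hdp i t ht).sub (hdp j t ht)).sub_const _
      exact (myHasDerivAt_abs_rpow hβ0 _).comp t he
    have h2 : HasDerivAt (fun s => (1/2) * ∑ i, (v i s) ^ 2)
        ((1/2) * ∑ i, ((2:ℕ) * v i t ^ 1 *
          (-(∑ j, a i j * sig (p i t - p j t - pstar i j) (2 * α / (1 + α)))
            - ∑ j, a i j * sig (v i t - v j t) α))) t := by
      apply HasDerivAt.const_mul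
      apply HasDerivAt.fun_sum; intro i _
      exact (hdv i t ht).pow 2
    have h3 := h1.add h2
    have hVeq : V = fun s =>
        (1 / (2 * (1 + β))) * ∑ i, ∑ j, a i j * |p i s - p j s - pstar i j| ^ (1 + β)
          + (1 / 2) * ∑ i, (v i s) ^ 2 := funext hV
    rw [hVeq]
    refine h3.congr_deriv ?_
    simp only [← hβ]
    -- algebraic identity
    have hsanti : ∀ i j : Fin N, sig (p i t - p j t - pstar i j) β
        = - sig (p j t - p i t - pstar j i) β := by
      intro i j
      have harg : p i t - p j t - pstar i j = -(p j t - p i t - pstar j i) := by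
        rw [hps, hps]; ring
      rw [harg, sig_neg]
    have hwanti : ∀ i j : Fin N, sig (v i t - v j t) α = - sig (v j t - v i t) α := by
      intro i j
      have harg : v i t - v j t = -(v j t - v i t) := by ring
      rw [harg, sig_neg]
    set B := ∑ i, ∑ j, a i j * sig (p i t - p j t - pstar i j) β * v i t with hB
    set T := ∑ i, ∑ j, a i j * sig (v i t - v j t) α * v i t with hT
    have hswap1 : ∑ i, ∑ j, a i j * sig (p i t - p j t - pstar i j) β * v j t = -B :=
      swap_sum a (fun i j => sig (p i t - p j t - pstar i j) β) hasymm hsanti _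
    have hswap2 : ∑ i, ∑ j, a i j * sig (v i t - v j t) α * v j t = -T :=
      swap_sum a (fun i j => sig (v i t - v j t) α) hasymm hwanti _
    have hB2 : B = ∑ i, (∑ j, a i j * sig (p i t - p j t - pstar i j) β) * v i t := by
      rw [hB]
      exact Finset.sum_congr rfl fun i _ => (Finset.sum_mul _ _ _).symm
    have hT2 : T = ∑ i, (∑ j, a i j * sig (v i t - v j t) α) * v i t := by
      rw [hT]
      exact Finset.sum_congr rfl fun i _ => (Finset.sum_mul _ _ _).symm
    have e1 : ∑ i, ∑ j, a i j *
          ((1 + β) * sig (p i t - p j t - pstar i j) β * (v i t - v j t))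
        = (1 + β) * B - (1 + β) * (-B) := by
      have h' : ∑ i, ∑ j, a i j *
            ((1 + β) * sig (p i t - p j t - pstar i j) β * (v i t - v j t))
          = ∑ i, ∑ j, ((1 + β) * (a i j * sig (p i t - p j t - pstar i j) β * v i t)
              - (1 + β) * (a i j * sig (p i t - p j t - pstar i j) β * v j t)) := by
        refine Finset.sum_congr rfl fun i _ => Finset.sum_congr rfl fun j _ => by ring
      rw [h']
      simp only [Finset.sum_sub_distrib, ← Finset.mul_sum]
      rw [hswap1, ← hB]
    have e2 : ∑ i, ((2:ℕ) * v i t ^ 1 *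
          (-(∑ j, a i j * sig (p i t - p j t - pstar i j) β)
            - ∑ j, a i j * sig (v i t - v j t) α))
        = -2 * B + -2 * T := by
      have h' : ∀ i : Fin N, ((2:ℕ):ℝ) * v i t ^ 1 *
            (-(∑ j, a i j * sig (p i t - p j t - pstar i j) β)
              - ∑ j, a i j * sig (v i t - v j t) α)
          = (-2) * ((∑ j, a i j * sig (p i t - p j t - pstar i j) β) * v i t)
            + (-2) * ((∑ j, a i j * sig (v i t - v j t) α) * v i t) := by
        intro i; push_cast; ring
      rw [Finset.sum_congr rfl fun i _ => h' i, Finset.sum_add_distrib,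
        ← Finset.mul_sum, ← Finset.mul_sum, ← hB2, ← hT2]
    have e3 : ∑ i, ∑ j, a i j * sig (v i t - v j t) α * (v i t - v j t)
        = T - (-T) := by
      have h' : ∑ i, ∑ j, a i j * sig (v i t - v j t) α * (v i t - v j t)
          = ∑ i, ∑ j, (a i j * sig (v i t - v j t) α * v i t
              - a i j * sig (v i t - v j t) α * v j t) := by
        refine Finset.sum_congr rfl fun i _ => Finset.sum_congr rfl fun j _ => by ring
      rw [h']
      simp only [Finset.sum_sub_distrib]
      rw [hswap2, ← hT]
    rw [hD]
    simp only
    rw [e3, e1, e2]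
    field_simp
    ring
  have hanti : AntitoneOn V (Set.Ici 0) := by
    apply antitoneOn_of_deriv_nonpos (convex_Ici 0)
    · intro x hx
      exact (key x hx).continuousAt.continuousWithinAt
    · intro x hx
      rw [interior_Ici] at hx
      exact (key x (le_of_lt hx)).differentiableAt.differentiableWithinAt
    · intro x hx
      rw [interior_Ici] at hx
      rw [(key x (le_of_lt hx)).deriv]
      exact hDnonpos x
  intro t ht
  have hVt : V t ≤ V 0 := hanti (Set.self_mem_Ici) ht ht
  refine ⟨hVt, fun i => ?_⟩
  have hsum : (0:ℝ) ≤ (1 / (2 * (1 + β))) *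
      ∑ i, ∑ j, a i j * |p i t - p j t - pstar i j| ^ (1 + β) := by
    apply mul_nonneg (by positivity)
    apply Finset.sum_nonneg; intro i _
    apply Finset.sum_nonneg; intro j _
    exact mul_nonneg (ha0 i j) (Real.rpow_nonneg (abs_nonneg _) _)
  have hsingle : (v i t) ^ 2 ≤ ∑ j, (v j t) ^ 2 :=
    Finset.single_le_sum (f := fun j => v j t ^ 2) (fun j _ => sq_nonneg _)
      (Finset.mem_univ i)
  have := hV t
  nlinarith [hVt]
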